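/- arXiv:2306.06262 — 6 statements merged into one kernel-verified Lean document; each statement's English description precedes it below -/
import Mathlib

section
/- For matrices T, S ∈ ℝ^{n₁×n₂}, the atomic norm of the Hadamard (entrywise) product satisfies ‖T * S‖_± ≤ ‖T ⊗ S‖_±, where ⊗ denotes the Kronecker product. -/
open Kronecker

/-- A sign matrix has all entries ±1. -/
def IsSignMatrix {m n : Type*} (S : Matrix m n ℝ) : Prop :=
  ∀ i j, S i j = 1 ∨ S i j = -1

/-- The atomic norm of a real matrix: infimum of ∑ |αᵢ| over decompositions
    T = ∑ αᵢ Sᵢ into ±1-valued matrices. -/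
noncomputable def atomicNorm {m n : Type*} (T : Matrix m n ℝ) : ℝ :=
  sInf { c | ∃ (k : ℕ) (α : Fin k → ℝ) (S : Fin k → Matrix m n ℝ),
    (∀ i, IsSignMatrix (S i)) ∧ T = ∑ i, α i • S i ∧ c = ∑ i, |α i| }

/-- Every real matrix admits a decomposition into sign matrices. -/
lemma exists_sign_decomp {m n : Type*} [Fintype m] [Fintype n] [DecidableEq m] [DecidableEq n]
    (M : Matrix m n ℝ) :
    ∃ (k : ℕ) (α : Fin k → ℝ) (Ss : Fin k → Matrix m n ℝ),
      (∀ i, IsSignMatrix (Ss i)) ∧ M = ∑ i, α i • Ss i := by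
  classical
  set ι := (m × n) × Bool
  let e : Fin (Fintype.card ι) ≃ ι := (Fintype.equivFin ι).symm
  let f : ι → ℝ := fun x => M x.1.1 x.1.2 / 2
  let g : ι → Matrix m n ℝ := fun x => fun r s =>
    if x.2 then 1 else (if r = x.1.1 ∧ s = x.1.2 then 1 else -1)
  refine ⟨Fintype.card ι, f ∘ e, g ∘ e, ?_, ?_⟩
  · intro i r s
    by_cases h : (e i).2
    · left; show g (e i) r s = 1; simp [g, h]
    · show g (e i) r s = 1 ∨ g (e i) r s = -1
      simp only [g, Function.comp_apply]; rw [if_neg h]; split_ifs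
      exacts [Or.inl rfl, Or.inr rfl]
  · have : ∑ i, (f ∘ e) i • (g ∘ e) i = ∑ x : ι, f x • g x := by
      exact Equiv.sum_comp e (fun x => f x • g x)
    rw [this]
    ext r s
    simp only [Matrix.sum_apply, Matrix.smul_apply, smul_eq_mul]
    rw [Fintype.sum_prod_type]
    simp only [Fintype.sum_bool]
    have : ∀ p : m × n, f (p, true) * g (p, true) r s + f (p, false) * g (p, false) r s
        = if r = p.1 ∧ s = p.2 then M p.1 p.2 else 0 := by
      intro p
      simp only [f, g, if_true, if_false, Bool.false_eq_true]
      split_ifs <;> ring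
    simp_rw [this]
    rw [Fintype.sum_prod_type]
    simp [ite_and, Finset.sum_ite_eq]

/-- The atomic norm of the Hadamard product is at most that of the Kronecker product. -/
theorem atomicNorm_hadamard_le_kronecker {n₁ n₂ : ℕ}
    (T S : Matrix (Fin n₁) (Fin n₂) ℝ) :
    atomicNorm (Matrix.hadamard T S) ≤ atomicNorm (T ⊗ₖ S) := by
  unfold atomicNorm
  apply csInf_le_csInf
  · refine ⟨0, ?_⟩
    rintro c ⟨k, α, Ss, -, -, hc⟩
    exact hc ▸ Finset.sum_nonneg fun i _ => abs_nonneg _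
  · obtain ⟨k, α, Ss, h1, h2⟩ := exists_sign_decomp (T ⊗ₖ S)
    exact ⟨∑ i, |α i|, k, α, Ss, h1, h2, rfl⟩
  · rintro c ⟨k, α, Ss, hsign, hdec, hc⟩
    refine ⟨k, α, fun i => Matrix.of fun a b => Ss i (a, a) (b, b),
      fun i a b => hsign i _ _, ?_, hc⟩
    ext a b
    have h := congrFun (congrFun hdec (a, a)) (b, b)
    simp only [Matrix.kroneckerMap_apply, Matrix.sum_apply, Matrix.smul_apply,
      smul_eq_mul] at h ⊢
    simpa [Matrix.hadamard] using h
end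

section
/- Let u ∈ ℝⁿ and v ∈ ℝᵐ with ‖u‖_∞ ≤ 1 and ‖v‖_∞ ≤ 1. Then the rank-1 matrix T = u vᵀ satisfies ‖T‖_± ≤ 1. -/
open Set

lemma LinearMap.apply₂_mem_convexHull_image2 {𝕜 E F G : Type*} [Field 𝕜] [LinearOrder 𝕜]
    [IsStrictOrderedRing 𝕜] [AddCommGroup E] [AddCommGroup F] [AddCommGroup G]
    [Module 𝕜 E] [Module 𝕜 F] [Module 𝕜 G] (f : E →ₗ[𝕜] F →ₗ[𝕜] G) {s : Set E} {t : Set F}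
    {x : E} {y : F} (hx : x ∈ convexHull 𝕜 s) (hy : y ∈ convexHull 𝕜 t) :
    f x y ∈ convexHull 𝕜 (image2 (fun a b ↦ f a b) s t) := by
  have hxt : f x '' t ⊆ convexHull 𝕜 (image2 (fun a b ↦ f a b) s t) := by
    rintro _ ⟨b, hb, rfl⟩
    have hmem : f.flip b x ∈ f.flip b '' convexHull 𝕜 s := mem_image_of_mem _ hx
    rw [LinearMap.image_convexHull] at hmem
    refine convexHull_mono ?_ hmem
    rintro _ ⟨a, ha, rfl⟩
    exact mem_image2_of_mem ha hb
  have hmem : f x y ∈ f x '' convexHull 𝕜 t := mem_image_of_mem _ hy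
  rw [LinearMap.image_convexHull] at hmem
  exact convexHull_min hxt (convex_convexHull 𝕜 _) hmem

lemma mem_convexHull_pi_pair_of_abs_le_one {ι : Type*} [Finite ι] {u : ι → ℝ}
    (hu : ∀ i, |u i| ≤ 1) : u ∈ convexHull ℝ (univ.pi fun _ ↦ ({-1, 1} : Set ℝ)) := by
  refine mem_convexHull_pi fun i _ ↦ ?_
  rw [convexHull_pair, segment_eq_Icc (by norm_num)]
  exact abs_le.1 (hu i)

lemma atomicNorm_le_sum_abs {m n ι : Type*} [Fintype ι] {T : Matrix m n ℝ}
    (α : ι → ℝ) (S : ι → Matrix m n ℝ) (hS : ∀ i, IsSignMatrix (S i))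
    (hT : T = ∑ i, α i • S i) : atomicNorm T ≤ ∑ i, |α i| := by
  have hbdd : BddBelow { c | ∃ (k : ℕ) (α : Fin k → ℝ) (S : Fin k → Matrix m n ℝ),
      (∀ i, IsSignMatrix (S i)) ∧ T = ∑ i, α i • S i ∧ c = ∑ i, |α i| } := by
    refine ⟨0, ?_⟩
    rintro c ⟨k, α, S, -, -, rfl⟩
    positivity
  let e := (Fintype.equivFin ι).symm
  refine csInf_le hbdd ⟨Fintype.card ι, α ∘ e, S ∘ e, fun j ↦ hS _, ?_, ?_⟩
  · rw [hT]
    exact (e.sum_comp fun i ↦ α i • S i).symm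
  · exact (e.sum_comp fun i ↦ |α i|).symm

lemma atomicNorm_le_one_of_mem_convexHull {m n : Type*} {T : Matrix m n ℝ}
    (hT : T ∈ convexHull ℝ {S | IsSignMatrix S}) : atomicNorm T ≤ 1 := by
  obtain ⟨ι, _, w, S, hw₀, hw₁, hS, rfl⟩ := mem_convexHull_iff_exists_fintype.1 hT
  calc atomicNorm (∑ i, w i • S i) ≤ ∑ i, |w i| := atomicNorm_le_sum_abs w S hS rfl
    _ = 1 := by simp_rw [abs_of_nonneg (hw₀ _), hw₁]

lemma isSignMatrix_vecMulVec {m n : Type*} {s : m → ℝ} {t : n → ℝ}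
    (hs : ∀ i, s i = -1 ∨ s i = 1) (ht : ∀ j, t j = -1 ∨ t j = 1) :
    IsSignMatrix (Matrix.vecMulVec s t) := by
  intro i j
  rcases hs i with hi | hi <;> rcases ht j with hj | hj <;> simp [Matrix.vecMulVec_apply, hi, hj]

/-- A rank-1 matrix with factors bounded by 1 in sup norm has atomic norm at most 1. -/
theorem atomicNorm_vecMulVec_le_one {n m : ℕ} (u : Fin n → ℝ) (v : Fin m → ℝ)
    (hu : ∀ i, |u i| ≤ 1) (hv : ∀ j, |v j| ≤ 1) :
    atomicNorm (Matrix.vecMulVec u v) ≤ 1 := by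
  refine atomicNorm_le_one_of_mem_convexHull (convexHull_mono ?_
    ((vecMulVecBilin ℝ ℝ).apply₂_mem_convexHull_image2
      (mem_convexHull_pi_pair_of_abs_le_one hu) (mem_convexHull_pi_pair_of_abs_le_one hv)))
  rintro _ ⟨s, hs, t, ht, rfl⟩
  exact isSignMatrix_vecMulVec (fun i ↦ hs i trivial) (fun j ↦ ht j trivial)
end

section
/- For vectors u₁ ∈ ℝ^{n₁}, u₂ ∈ ℝ^{n₂}, u₃ ∈ ℝ^{n₃} with ‖uᵢ‖_∞ ≤ 1 for each i, the order-3 rank-1 tensor T with entries T_{i,j,k} = u₁(i) u₂(j) u₃(k) satisfies ‖T‖_± ≤ 1. -/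
/-- A sign (order-3) tensor has all entries ±1. -/
def IsSignTensor3 {n₁ n₂ n₃ : Type*} (S : n₁ → n₂ → n₃ → ℝ) : Prop :=
  ∀ i j k, S i j k = 1 ∨ S i j k = -1

/-- The atomic norm of an order-3 real tensor. -/
noncomputable def atomicNorm3 {n₁ n₂ n₃ : Type*} (T : n₁ → n₂ → n₃ → ℝ) : ℝ :=
  sInf { c | ∃ (k : ℕ) (α : Fin k → ℝ) (S : Fin k → (n₁ → n₂ → n₃ → ℝ)),
    (∀ i, IsSignTensor3 (S i)) ∧ T = ∑ i, α i • S i ∧ c = ∑ i, |α i| }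

namespace AtomicAux

noncomputable def sg (b : Bool) : ℝ := if b then 1 else -1

lemma sg_sq (b : Bool) : sg b * sg b = 1 := by cases b <;> simp [sg]

noncomputable def wt {n : ℕ} (u : Fin n → ℝ) (s : Fin n → Bool) : ℝ :=
  ∏ l, (1 + sg (s l) * u l) / 2

lemma wt_nonneg {n : ℕ} (u : Fin n → ℝ) (h : ∀ i, |u i| ≤ 1) (s : Fin n → Bool) :
    0 ≤ wt u s := by
  refine Finset.prod_nonneg fun l _ => ?_
  have := abs_le.1 (h l)
  cases hb : s l <;> simp [sg] <;> nlinarith [this.1, this.2]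

lemma sum_wt {n : ℕ} (u : Fin n → ℝ) : ∑ s : Fin n → Bool, wt u s = 1 := by
  unfold wt
  rw [← Fintype.prod_sum (fun (l : Fin n) (b : Bool) => (1 + sg b * u l) / 2)]
  refine Finset.prod_eq_one fun l _ => by simp [sg]; ring

lemma sum_wt_sg {n : ℕ} (u : Fin n → ℝ) (i : Fin n) :
    ∑ s : Fin n → Bool, wt u s * sg (s i) = u i := by
  have h : ∀ s : Fin n → Bool, wt u s * sg (s i)
      = ∏ l, ((1 + sg (s l) * u l) / 2 * (if l = i then sg (s l) else 1)) := by
    intro s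
    rw [Finset.prod_mul_distrib, Finset.prod_ite_eq' Finset.univ i (fun l => sg (s l))]
    simp [wt]
  simp only [h]
  rw [← Fintype.prod_sum (fun (l : Fin n) (b : Bool) =>
    (1 + sg b * u l) / 2 * (if l = i then sg b else 1))]
  have : ∀ l : Fin n,
      (∑ b : Bool, (1 + sg b * u l) / 2 * (if l = i then sg b else 1))
        = if l = i then u l else 1 := by
    intro l
    by_cases hl : l = i <;> simp [hl, sg] <;> ring
  simp only [this]
  rw [Finset.prod_ite_eq' Finset.univ i u]
  simp

end AtomicAux

open AtomicAux in
/-- A rank-1 order-3 tensor whose factors have sup norm at most 1 has atomic norm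
    at most 1. -/
theorem atomicNorm3_rank_one_le_one {n₁ n₂ n₃ : ℕ}
    (u₁ : Fin n₁ → ℝ) (u₂ : Fin n₂ → ℝ) (u₃ : Fin n₃ → ℝ)
    (h₁ : ∀ i, |u₁ i| ≤ 1) (h₂ : ∀ j, |u₂ j| ≤ 1) (h₃ : ∀ k, |u₃ k| ≤ 1) :
    atomicNorm3 (fun i j k => u₁ i * u₂ j * u₃ k) ≤ 1 := by
  set ι := ((Fin n₁ → Bool) × (Fin n₂ → Bool) × (Fin n₃ → Bool))
  let e : Fin (Fintype.card ι) ≃ ι := (Fintype.equivFin ι).symm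
  let α : Fin (Fintype.card ι) → ℝ := fun m =>
    wt u₁ (e m).1 * (wt u₂ (e m).2.1 * wt u₃ (e m).2.2)
  let S : Fin (Fintype.card ι) → (Fin n₁ → Fin n₂ → Fin n₃ → ℝ) := fun m i j k =>
    sg ((e m).1 i) * sg ((e m).2.1 j) * sg ((e m).2.2 k)
  have hnn : ∀ m, 0 ≤ α m := fun m =>
    mul_nonneg (wt_nonneg u₁ h₁ _) (mul_nonneg (wt_nonneg u₂ h₂ _) (wt_nonneg u₃ h₃ _))
  have key : ∀ (g : ι → ℝ), ∑ m, (fun m => g (e m)) m = ∑ x : ι, g x := by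
    intro g; exact Fintype.sum_equiv e _ _ (fun m => rfl)
  apply csInf_le
  · refine ⟨0, fun c hc => ?_⟩
    obtain ⟨k, β, _, _, _, hc⟩ := hc
    exact hc ▸ Finset.sum_nonneg fun i _ => abs_nonneg _
  · refine ⟨Fintype.card ι, α, S, fun m i j k => ?_, ?_, ?_⟩
    · rcases Bool.eq_false_or_eq_true ((e m).1 i) with h | h <;>
      rcases Bool.eq_false_or_eq_true ((e m).2.1 j) with h' | h' <;>
      rcases Bool.eq_false_or_eq_true ((e m).2.2 k) with h'' | h'' <;>
      simp [S, sg, h, h', h'']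
    · funext i j k
      have := key (fun x : ι => (wt u₁ x.1 * (wt u₂ x.2.1 * wt u₃ x.2.2)) *
        (sg (x.1 i) * sg (x.2.1 j) * sg (x.2.2 k)))
      have hpt : (∑ m, α m • S m) i j k
          = ∑ x : ι, (wt u₁ x.1 * (wt u₂ x.2.1 * wt u₃ x.2.2)) *
            (sg (x.1 i) * sg (x.2.1 j) * sg (x.2.2 k)) := by
        rw [← this]
        simp only [Finset.sum_apply, Pi.smul_apply, smul_eq_mul]
        rfl
      rw [hpt]
      rw [Fintype.sum_prod_type]
      simp only [Fintype.sum_prod_type]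
      have : ∀ (a : Fin n₁ → Bool), ∑ b : Fin n₂ → Bool, ∑ c : Fin n₃ → Bool,
          wt u₁ a * (wt u₂ b * wt u₃ c) * (sg (a i) * sg (b j) * sg (c k))
          = (wt u₁ a * sg (a i)) * (u₂ j * u₃ k) := by
        intro a
        have hb : ∀ b : Fin n₂ → Bool, ∑ c : Fin n₃ → Bool,
            wt u₁ a * (wt u₂ b * wt u₃ c) * (sg (a i) * sg (b j) * sg (c k))
            = (wt u₁ a * sg (a i)) * (wt u₂ b * sg (b j)) * u₃ k := by
          intro b
          rw [← sum_wt_sg u₃ k, Finset.mul_sum]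
          exact Finset.sum_congr rfl fun c _ => by ring
        simp only [hb]
        rw [← Finset.sum_mul, ← Finset.mul_sum, sum_wt_sg u₂ j]
        ring
      simp only [this]
      rw [← Finset.sum_mul, sum_wt_sg u₁ i]
      ring
    · have := key (fun x : ι => wt u₁ x.1 * (wt u₂ x.2.1 * wt u₃ x.2.2))
      symm
      calc ∑ m, |α m| = ∑ m, α m := by
            exact Finset.sum_congr rfl fun m _ => abs_of_nonneg (hnn m)
        _ = ∑ x : ι, wt u₁ x.1 * (wt u₂ x.2.1 * wt u₃ x.2.2) := this
        _ = 1 := by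
            rw [Fintype.sum_prod_type]
            have h1 : ∀ a : Fin n₁ → Bool, ∑ x : (Fin n₂ → Bool) × (Fin n₃ → Bool),
                wt u₁ a * (wt u₂ x.1 * wt u₃ x.2) = wt u₁ a := by
              intro a
              rw [← Finset.mul_sum, Fintype.sum_prod_type]
              have hb : ∀ b : Fin n₂ → Bool, ∑ c : Fin n₃ → Bool,
                  wt u₂ b * wt u₃ c = wt u₂ b := fun b => by
                rw [← Finset.mul_sum, sum_wt, mul_one]
              simp only [hb, sum_wt, mul_one]
            simp only [h1, sum_wt]
end

section
/- Let A be the adjacency matrix of a d-regular graph G on n vertices with λ = ‖A - (d/n)J‖, and let S be an n×n sign matrix (entries ±1) written as S = s tᵀ for sign vectors s, t ∈ {±1}ⁿ. Then |(1/n²) Σ_{i,j} S_{i,j} - (1/(nd)) Σ_{(i,j): A_{i,j}=1} S_{i,j}| ≤ λ/d. -/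
/-- The spectral (operator) norm of a square real matrix, expressed as a supremum of
    the bilinear form over vectors of norm at most 1. -/
noncomputable def opNorm {n : ℕ} (M : Matrix (Fin n) (Fin n) ℝ) : ℝ :=
  sSup { c | ∃ u v : EuclideanSpace ℝ (Fin n), ‖u‖ ≤ 1 ∧ ‖v‖ ≤ 1 ∧
    c = |∑ i, ∑ j, u i * M i j * v j| }

/-- The all-ones matrix. -/
def allOnes (n : ℕ) : Matrix (Fin n) (Fin n) ℝ := Matrix.of fun _ _ => (1 : ℝ)

lemma abs_coord_le {n : ℕ} (u : EuclideanSpace ℝ (Fin n)) (i : Fin n) : |u i| ≤ ‖u‖ := by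
  rw [EuclideanSpace.norm_eq u]
  have h1 : |u i| = Real.sqrt (‖u i‖ ^ 2) := by
    rw [Real.sqrt_sq_eq_abs, Real.norm_eq_abs, abs_abs]
  rw [h1]
  exact Real.sqrt_le_sqrt (Finset.single_le_sum (f := fun j => ‖u j‖ ^ 2)
    (fun j _ => sq_nonneg _) (Finset.mem_univ i))

lemma opNorm_bddAbove {n : ℕ} (M : Matrix (Fin n) (Fin n) ℝ) :
    BddAbove { c | ∃ u v : EuclideanSpace ℝ (Fin n), ‖u‖ ≤ 1 ∧ ‖v‖ ≤ 1 ∧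
      c = |∑ i, ∑ j, u i * M i j * v j| } := by
  refine ⟨∑ i, ∑ j, |M i j|, ?_⟩
  rintro c ⟨u, v, hu, hv, rfl⟩
  calc |∑ i, ∑ j, u i * M i j * v j| ≤ ∑ i, |∑ j, u i * M i j * v j| :=
        Finset.abs_sum_le_sum_abs _ _
    _ ≤ ∑ i, ∑ j, |u i * M i j * v j| :=
        Finset.sum_le_sum (fun i _ => Finset.abs_sum_le_sum_abs _ _)
    _ ≤ ∑ i, ∑ j, |M i j| := by
        refine Finset.sum_le_sum fun i _ => Finset.sum_le_sum fun j _ => ?_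
        rw [abs_mul, abs_mul]
        have hui : |u i| ≤ 1 := (abs_coord_le u i).trans hu
        have hvj : |v j| ≤ 1 := (abs_coord_le v j).trans hv
        calc |u i| * |M i j| * |v j| ≤ 1 * |M i j| * 1 := by
              apply mul_le_mul (mul_le_mul_of_nonneg_right hui (abs_nonneg _)) hvj
                (abs_nonneg _) (by positivity)
          _ = |M i j| := by ring

/-- Sampling a rank-1 sign matrix along the edges of a d-regular expander
    approximates its average entry up to λ/d. -/
theorem sign_matrix_expander_sampling {n d : ℕ} (A : Matrix (Fin n) (Fin n) ℝ)
    (lam : ℝ) (s t : Fin n → ℝ)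
    (hn : 0 < n) (hd : 0 < d)
    (h01 : ∀ i j, A i j = 0 ∨ A i j = 1) (hsym : A.IsSymm)
    (hreg : ∀ i, ∑ j, A i j = (d : ℝ))
    (hlam : opNorm (A - ((d : ℝ) / (n : ℝ)) • allOnes n) ≤ lam)
    (hs : ∀ i, s i = 1 ∨ s i = -1) (ht : ∀ j, t j = 1 ∨ t j = -1) :
    |(1 / (n : ℝ) ^ 2) * (∑ i, ∑ j, s i * t j) -
      (1 / ((n : ℝ) * (d : ℝ))) * (∑ i, ∑ j, A i j * (s i * t j))| ≤ lam / d := by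
  have hnR : (0:ℝ) < n := by exact_mod_cast hn
  have hdR : (0:ℝ) < d := by exact_mod_cast hd
  have hsqrt : Real.sqrt n * Real.sqrt n = n := Real.mul_self_sqrt hnR.le
  have hsqrt_pos : (0:ℝ) < Real.sqrt n := Real.sqrt_pos.mpr hnR
  set M := A - ((d : ℝ) / (n : ℝ)) • allOnes n with hM
  set u : EuclideanSpace ℝ (Fin n) := WithLp.toLp 2 (fun i => s i / Real.sqrt n) with hu
  set v : EuclideanSpace ℝ (Fin n) := WithLp.toLp 2 (fun j => t j / Real.sqrt n) with hv
  have hnorm : ∀ (w : Fin n → ℝ), (∀ i, w i = 1 ∨ w i = -1) →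
      ‖(show EuclideanSpace ℝ (Fin n) from WithLp.toLp 2 (fun i => w i / Real.sqrt n))‖ ≤ 1 := by
    intro w hw
    rw [EuclideanSpace.norm_eq]
    simp only [PiLp.toLp_apply]
    have : ∀ i : Fin n, ‖w i / Real.sqrt n‖ ^ 2 = 1 / n := by
      intro i
      have hw2 : (w i)^2 = 1 := by rcases hw i with h | h <;> simp [h]
      rw [Real.norm_eq_abs, sq_abs, div_pow, hw2]
      rw [sq, hsqrt]
    rw [Finset.sum_congr rfl (fun i _ => this i)]
    simp [Finset.sum_const, Finset.card_univ, mul_inv_cancel₀ hsqrt_pos.ne']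
  set X := ∑ i, ∑ j, s i * t j with hX
  set Y := ∑ i, ∑ j, A i j * (s i * t j) with hY
  have key : ∑ i, ∑ j, u i * M i j * v j = (1/(n:ℝ)) * Y - ((d:ℝ)/(n:ℝ)^2) * X := by
    have hpt : ∀ i j, u i * M i j * v j =
        (1/(n:ℝ)) * (A i j * (s i * t j)) - ((d:ℝ)/(n:ℝ)^2) * (s i * t j) := by
      intro i j
      simp only [hu, hv, hM, PiLp.toLp_apply, Matrix.sub_apply, Matrix.smul_apply, allOnes, Matrix.of_apply,
        smul_eq_mul, mul_one]
      field_simp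
      ring_nf
      rw [Real.sq_sqrt hnR.le]
      ring
    simp only [hpt, Finset.sum_sub_distrib, ← Finset.mul_sum]
    have hX' : ∑ i, s i * ∑ j, t j = X := by simp [hX, Finset.mul_sum]
    rw [hX']
  have hmem : |∑ i, ∑ j, u i * M i j * v j| ∈
      { c | ∃ u v : EuclideanSpace ℝ (Fin n), ‖u‖ ≤ 1 ∧ ‖v‖ ≤ 1 ∧
        c = |∑ i, ∑ j, u i * M i j * v j| } :=
    ⟨u, v, hnorm s hs, hnorm t ht, rfl⟩
  have hle : |∑ i, ∑ j, u i * M i j * v j| ≤ lam :=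
    le_trans (le_csSup (opNorm_bddAbove M) hmem) hlam
  rw [key] at hle
  have heq : (1/(n:ℝ)^2) * X - (1/((n:ℝ)*(d:ℝ))) * Y =
      -((1/(n:ℝ)) * Y - ((d:ℝ)/(n:ℝ)^2) * X) / d := by
    field_simp
    ring
  rw [heq, abs_div, abs_neg, abs_of_pos hdR]
  exact div_le_div_of_nonneg_right hle hdR.le |>.trans_eq rfl
end

section
/- Let T be an n×n×n tensor of CP-rank at most r with all entries in [-1,1], with decomposition T = Σ_{j=1}^r v_j¹ ∘ v_j² ∘ v_j³. Suppose the mode-1 matricization T_{[1]} factors as T_{[1]} = X Yᵀ with ‖X‖_{2,∞} ≤ √r, ‖Y‖_∞ ≤ 1, where each column of Y is a linear combination of the vectors v_j² ⊗ v_j³, and each corresponding order-2 tensor E_i = Σ_j γ_{ij} v_j² ∘ v_j³ satisfies ‖E_i‖_± ≤ B. Then ‖T‖_± ≤ r^{3/2} B. -/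
/-- Any point of the cube `[-1,1]^ι` is a convex combination of sign vectors. -/
lemma cube_decomp {ι : Type*} [Fintype ι] [DecidableEq ι] (y : ι → ℝ)
    (hy : ∀ j, |y j| ≤ 1) :
    ∃ w : (ι → Bool) → ℝ, (∀ σ, 0 ≤ w σ) ∧ (∑ σ, w σ = 1) ∧
      ∀ j, y j = ∑ σ, w σ * (if σ j then 1 else -1) := by
  refine ⟨fun σ => ∏ i, (1 + (if σ i then y i else - y i)) / 2, ?_, ?_, ?_⟩
  · intro σ
    apply Finset.prod_nonneg
    intro i _
    have := abs_le.mp (hy i)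
    split <;> nlinarith [this.1, this.2]
  · rw [← Fintype.prod_sum (fun i (b : Bool) => (1 + (if b then y i else - y i)) / 2)]
    refine Finset.prod_eq_one fun i _ => by simp [Fintype.sum_bool]; ring
  · intro j
    have key : ∀ σ : ι → Bool,
        (∏ i, (1 + (if σ i then y i else - y i)) / 2) * (if σ j then (1:ℝ) else -1)
        = ∏ i, ((1 + (if σ i then y i else - y i)) / 2 * (if i = j then (if σ i then (1:ℝ) else -1) else 1)) := by
      intro σ
      rw [Finset.prod_mul_distrib, Finset.prod_ite_eq' Finset.univ j
        (fun i => if σ i then (1:ℝ) else -1)]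
      simp
    calc y j = ∏ i, (if i = j then y i else 1) := by
            rw [Finset.prod_ite_eq' Finset.univ j (fun i => y i)]; simp
      _ = ∑ σ : ι → Bool, ∏ i, ((1 + (if σ i then y i else - y i)) / 2 * (if i = j then (if σ i then (1:ℝ) else -1) else 1)) := by
            rw [← Fintype.prod_sum (fun i (b : Bool) => (1 + (if b then y i else - y i)) / 2 * (if i = j then (if b then (1:ℝ) else -1) else 1))]
            refine Finset.prod_congr rfl fun i _ => ?_
            rw [Fintype.sum_bool]
            by_cases h : i = j <;> simp [h] <;> ring
      _ = ∑ σ : ι → Bool, (∏ i, (1 + (if σ i then y i else - y i)) / 2) * (if σ j then 1 else -1) := by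
            exact Finset.sum_congr rfl fun σ _ => (key σ).symm


lemma atomicNorm3_le_sum {n₁ n₂ n₃ : Type*} {ι : Type*} [Fintype ι]
    (T : n₁ → n₂ → n₃ → ℝ) (α : ι → ℝ) (S : ι → (n₁ → n₂ → n₃ → ℝ))
    (hS : ∀ i, IsSignTensor3 (S i)) (hT : T = ∑ i, α i • S i) :
    atomicNorm3 T ≤ ∑ i, |α i| := by
  apply csInf_le
  · exact ⟨0, by rintro c ⟨k, a, s, -, -, rfl⟩; positivity⟩
  · refine ⟨Fintype.card ι, α ∘ (Fintype.equivFin ι).symm, S ∘ (Fintype.equivFin ι).symm,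
      fun i => hS _, ?_, ?_⟩
    · rw [hT]
      exact (Equiv.sum_comp (Fintype.equivFin ι).symm (fun i => α i • S i)).symm
    · exact (Equiv.sum_comp (Fintype.equivFin ι).symm fun i => |α i|).symm

lemma atomicNorm_set_nonempty {m n : Type*} [Fintype m] [Fintype n] [DecidableEq m]
    [DecidableEq n] (M : Matrix m n ℝ) (hM : ∀ p q, |M p q| ≤ 1) :
    Set.Nonempty { c | ∃ (k : ℕ) (α : Fin k → ℝ) (S : Fin k → Matrix m n ℝ),
      (∀ i, IsSignMatrix (S i)) ∧ M = ∑ i, α i • S i ∧ c = ∑ i, |α i| } := by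
  obtain ⟨w, hw0, _, hwy⟩ := cube_decomp (fun pq : m × n => M pq.1 pq.2)
    (fun pq => hM pq.1 pq.2)
  set e := Fintype.equivFin (m × n → Bool)
  refine ⟨∑ i, |w (e.symm i)|, Fintype.card (m × n → Bool), fun i => w (e.symm i),
    fun i => Matrix.of fun p q => if e.symm i (p, q) then 1 else -1, ?_, ?_, rfl⟩
  · intro i p q
    by_cases h : e.symm i (p, q) <;> simp [h]
  · ext p q
    have := hwy (p, q)
    rw [this, ← Equiv.sum_comp e.symm
      (fun σ => w σ * (if σ (p, q) then (1:ℝ) else -1))]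
    simp [Matrix.sum_apply]

/-- The induction step bounding the atomic norm of a rank-r order-3 tensor: given a
    mode-1 matricization factorization T_[1] = X Yᵀ with ‖X‖_{2,∞} ≤ √r, ‖Y‖_∞ ≤ 1,
    where each column of Y corresponds to an order-2 tensor E_i of atomic norm at
    most B, we get ‖T‖_± ≤ r^{3/2} B. -/
theorem atomicNorm3_induction_step {n r : ℕ}
    (T : Fin n → Fin n → Fin n → ℝ)
    (v₁ v₂ v₃ : Fin r → Fin n → ℝ)
    (X : Matrix (Fin n) (Fin r) ℝ)
    (Y : Matrix (Fin n × Fin n) (Fin r) ℝ)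
    (γ : Matrix (Fin r) (Fin r) ℝ) (B : ℝ)
    (hT : ∀ i j k, T i j k = ∑ l, v₁ l i * v₂ l j * v₃ l k)
    (hTinf : ∀ i j k, |T i j k| ≤ 1)
    (hfact : ∀ i p, T i p.1 p.2 = ∑ l, X i l * Y p l)
    (hX : ∀ i, Real.sqrt (∑ l, X i l ^ 2) ≤ Real.sqrt r)
    (hYinf : ∀ p l, |Y p l| ≤ 1)
    (hYcol : ∀ (p : Fin n × Fin n) (i : Fin r),
      Y p i = ∑ j, γ i j * (v₂ j p.1 * v₃ j p.2))
    (hE : ∀ i : Fin r,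
      atomicNorm (Matrix.of fun p q => ∑ j, γ i j * (v₂ j p * v₃ j q)) ≤ B) :
    atomicNorm3 T ≤ (r : ℝ) * Real.sqrt r * B := by
  rcases Nat.eq_zero_or_pos r with hr | hr
  · subst hr
    have hT0 : T = ∑ i : Fin 0, (0:ℝ) • (fun _ _ _ => (1:ℝ)) := by
      funext i j k
      simp [hT i j k]
    have := atomicNorm3_le_sum T (fun _ : Fin 0 => (0:ℝ)) (fun _ _ _ _ => (1:ℝ))
      (fun i _ _ _ => Or.inl rfl) hT0
    simpa using this
  · have hrR : (0:ℝ) < r := Nat.cast_pos.mpr hr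
    have hsq : (0:ℝ) < Real.sqrt r := Real.sqrt_pos.mpr hrR
    have hrs : (0:ℝ) < (r:ℝ) * Real.sqrt r := mul_pos hrR hsq
    -- entrywise bound on X
    have hXb : ∀ i l, |X i l| ≤ Real.sqrt r := by
      intro i l
      have h1 : ∑ m, X i m ^ 2 ≤ (r : ℝ) := by
        have := hX i
        have h0 : (0:ℝ) ≤ ∑ m, X i m ^ 2 := Finset.sum_nonneg fun m _ => sq_nonneg _
        nlinarith [Real.sq_sqrt h0, Real.sq_sqrt (le_of_lt hrR),
          Real.sqrt_nonneg ((r:ℝ)), Real.sqrt_nonneg (∑ m, X i m ^ 2)]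
      have h2 : X i l ^ 2 ≤ (r : ℝ) := by
        refine le_trans ?_ h1
        exact Finset.single_le_sum (f := fun m => X i m ^ 2)
          (fun m _ => sq_nonneg _) (Finset.mem_univ l)
      have := Real.sqrt_le_sqrt h2
      rwa [Real.sqrt_sq_eq_abs] at this
    apply le_of_forall_pos_le_add
    intro δ hδ
    set ε := δ / ((r:ℝ) * Real.sqrt r) with hε
    have hεpos : 0 < ε := div_pos hδ hrs
    -- extract decompositions of the matrices E l
    have hdec : ∀ l : Fin r, ∃ (k : ℕ) (α : Fin k → ℝ)
        (S : Fin k → Matrix (Fin n) (Fin n) ℝ),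
        (∀ m, IsSignMatrix (S m)) ∧
        (∀ p q, Y (p, q) l = ∑ m, α m * S m p q) ∧ ∑ m, |α m| ≤ B + ε := by
      intro l
      have hbb : BddBelow { c | ∃ (k : ℕ) (α : Fin k → ℝ)
          (S : Fin k → Matrix (Fin n) (Fin n) ℝ),
          (∀ i, IsSignMatrix (S i)) ∧
          (Matrix.of fun p q => ∑ j, γ l j * (v₂ j p * v₃ j q)) = ∑ i, α i • S i ∧
          c = ∑ i, |α i| } :=
        ⟨0, by rintro c ⟨k, a, s, -, -, rfl⟩; positivity⟩
      have hne := atomicNorm_set_nonempty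
        (Matrix.of fun p q => ∑ j, γ l j * (v₂ j p * v₃ j q))
        (fun p q => by rw [Matrix.of_apply, ← hYcol (p, q) l]; exact hYinf (p, q) l)
      have hlt : atomicNorm (Matrix.of fun p q => ∑ j, γ l j * (v₂ j p * v₃ j q))
          < B + ε := lt_of_le_of_lt (hE l) (lt_add_of_pos_right B hεpos)
      obtain ⟨c, ⟨k, α, S, hS, hEq, rfl⟩, hc⟩ := (csInf_lt_iff hbb hne).mp hlt
      refine ⟨k, α, S, hS, ?_, le_of_lt hc⟩
      intro p q
      have := congrFun (congrFun hEq p) q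
      rw [hYcol (p, q) l]
      simpa [Matrix.sum_apply] using this
    choose k α S hS hSeq hαsum using hdec
    -- cube decomposition of each scaled slice
    have hcube : ∀ (l : Fin r) (m : Fin (k l)),
        ∃ w : (Fin n × Fin n × Fin n → Bool) → ℝ, (∀ σ, 0 ≤ w σ) ∧ (∑ σ, w σ = 1) ∧
          ∀ p : Fin n × Fin n × Fin n,
            X p.1 l * S l m p.2.1 p.2.2 / Real.sqrt r
              = ∑ σ, w σ * (if σ p then 1 else -1) := by
      intro l m
      apply cube_decomp
      intro p
      rw [abs_div, abs_mul, abs_of_pos hsq]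
      rw [div_le_one hsq]
      have h1 : |S l m p.2.1 p.2.2| = 1 := by
        rcases hS l m p.2.1 p.2.2 with h | h <;> simp [h]
      rw [h1, mul_one]
      exact hXb p.1 l
    choose w hw0 hw1 hwy using hcube
    -- the big decomposition
    set ι := Σ l : Fin r, Fin (k l) × (Fin n × Fin n × Fin n → Bool) with hι
    set β : ι → ℝ := fun x => α x.1 x.2.1 * Real.sqrt r * w x.1 x.2.1 x.2.2 with hβ
    set 𝒮 : ι → (Fin n → Fin n → Fin n → ℝ) :=
      fun x i j kk => if x.2.2 (i, j, kk) then 1 else -1 with h𝒮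
    have h𝒮sign : ∀ x, IsSignTensor3 (𝒮 x) := by
      intro x i j kk
      by_cases h : x.2.2 (i, j, kk) <;> simp [h𝒮, h]
    have hTeq : T = ∑ x : ι, β x • 𝒮 x := by
      funext i j kk
      have hs : (∑ x : ι, β x • 𝒮 x) i j kk = ∑ x : ι, β x * 𝒮 x i j kk := by
        simp [Finset.sum_apply]
      rw [hs]
      rw [← Finset.univ_sigma_univ, Finset.sum_sigma]
      have hstep : ∀ l : Fin r,
          ∑ p : Fin (k l) × (Fin n × Fin n × Fin n → Bool),
            β ⟨l, p⟩ * 𝒮 ⟨l, p⟩ i j kk = X i l * Y (j, kk) l := by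
        intro l
        rw [Fintype.sum_prod_type]
        have hinner : ∀ m : Fin (k l),
            ∑ σ : Fin n × Fin n × Fin n → Bool,
              β ⟨l, (m, σ)⟩ * 𝒮 ⟨l, (m, σ)⟩ i j kk
            = α l m * (X i l * S l m j kk) := by
          intro m
          have : ∑ σ : Fin n × Fin n × Fin n → Bool,
              β ⟨l, (m, σ)⟩ * 𝒮 ⟨l, (m, σ)⟩ i j kk
              = α l m * Real.sqrt r *
                ∑ σ, w l m σ * (if σ (i, j, kk) then 1 else -1) := by
            rw [Finset.mul_sum]
            exact Finset.sum_congr rfl fun σ _ => by simp [hβ, h𝒮, mul_assoc]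
          rw [this, ← hwy l m (i, j, kk)]
          field_simp
        rw [Finset.sum_congr rfl fun m _ => hinner m]
        rw [hSeq l j kk, Finset.mul_sum]
        exact Finset.sum_congr rfl fun m _ => by ring
      rw [Finset.sum_congr rfl fun l _ => hstep l]
      exact hfact i (j, kk)
    have hfinal := atomicNorm3_le_sum T β 𝒮 h𝒮sign hTeq
    refine le_trans hfinal ?_
    have habs : ∑ x : ι, |β x| ≤ (r:ℝ) * Real.sqrt r * B + δ := by
      rw [← Finset.univ_sigma_univ, Finset.sum_sigma]
      have hl : ∀ l : Fin r,
          ∑ p : Fin (k l) × (Fin n × Fin n × Fin n → Bool), |β ⟨l, p⟩|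
            ≤ Real.sqrt r * (B + ε) := by
        intro l
        rw [Fintype.sum_prod_type]
        have hm : ∀ m : Fin (k l),
            ∑ σ : Fin n × Fin n × Fin n → Bool, |β ⟨l, (m, σ)⟩|
              = |α l m| * Real.sqrt r := by
          intro m
          have : ∀ σ, |β ⟨l, (m, σ)⟩| = |α l m| * Real.sqrt r * w l m σ := by
            intro σ
            rw [hβ]
            rw [abs_mul, abs_mul, abs_of_nonneg (hw0 l m σ),
              abs_of_nonneg (le_of_lt hsq)]
          rw [Finset.sum_congr rfl fun σ _ => this σ, ← Finset.mul_sum, hw1 l m,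
            mul_one]
        rw [Finset.sum_congr rfl fun m _ => hm m, ← Finset.sum_mul]
        rw [mul_comm]
        exact mul_le_mul_of_nonneg_left (hαsum l) (le_of_lt hsq)
      calc ∑ l : Fin r, ∑ p : Fin (k l) × (Fin n × Fin n × Fin n → Bool), |β ⟨l, p⟩|
          ≤ ∑ _l : Fin r, Real.sqrt r * (B + ε) :=
            Finset.sum_le_sum fun l _ => hl l
        _ = (r:ℝ) * (Real.sqrt r * (B + ε)) := by
            rw [Finset.sum_const, Finset.card_univ, Fintype.card_fin, nsmul_eq_mul]
        _ = (r:ℝ) * Real.sqrt r * B + (r:ℝ) * Real.sqrt r * ε := by ring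
        _ = (r:ℝ) * Real.sqrt r * B + δ := by
            rw [hε, mul_div_cancel₀ _ (ne_of_gt hrs)]
    exact habs
end

section
/- Let X be a Poisson random variable with parameter μ ∈ [β, α] where 0 < β ≤ α, and let z ∈ [β, α]. Then the expected Poisson log-likelihood gap satisfies E[X log μ - μ] - E[X log z - z] ≥ (1/(2α)) (μ - z)² ; i.e., the expected excess negative log-likelihood dominates the squared parameter error up to factor 1/(2α). -/
private lemma g_hasDerivAt (μ α : ℝ) {x : ℝ} (hx : 0 < x) :
    HasDerivAt (fun t => t - μ * Real.log t - (μ - t) ^ 2 / (2 * α))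
      (1 - μ / x + (μ - x) / α) x := by
  have h1 := (hasDerivAt_id x).sub ((Real.hasDerivAt_log hx.ne').const_mul μ)
  have h2 : HasDerivAt (fun t : ℝ => (μ - t) ^ 2 / (2 * α))
      ((2 : ℕ) * (μ - x) ^ 1 * (-1) / (2 * α)) x :=
    (((hasDerivAt_id x).const_sub μ).pow 2).div_const (2 * α)
  have := h1.sub h2
  exact this.congr_deriv (by push_cast; ring)

/-- Strong convexity of the expected Poisson negative log-likelihood: for a Poisson
    observation with true mean μ ∈ [β, α], the expected log-likelihood gap between
    μ and any candidate z ∈ [β, α] dominates (μ - z)²/(2α).  (Since E[X] = μ, the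
    expected gap E[X log μ - μ] - E[X log z - z] equals μ log(μ/z) - (μ - z).) -/
theorem poisson_loglik_strong_convexity {α β μ z : ℝ}
    (hβ : 0 < β) (hβα : β ≤ α)
    (hμ : μ ∈ Set.Icc β α) (hz : z ∈ Set.Icc β α) :
    (μ * Real.log μ - μ) - (μ * Real.log z - z) ≥ (μ - z) ^ 2 / (2 * α) := by
  obtain ⟨hμ1, hμ2⟩ := hμ
  obtain ⟨hz1, hz2⟩ := hz
  have hα : 0 < α := lt_of_lt_of_le hβ hβα
  have hμ0 : 0 < μ := lt_of_lt_of_le hβ hμ1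
  have hz0 : 0 < z := lt_of_lt_of_le hβ hz1
  set g : ℝ → ℝ := fun t => t - μ * Real.log t - (μ - t) ^ 2 / (2 * α) with hg
  suffices h : g μ ≤ g z by
    simp only [hg] at h
    have h0 : (μ - μ) ^ 2 / (2 * α) = 0 := by simp
    linarith
  have hcont : ∀ s ⊆ Set.Ioi (0:ℝ), ContinuousOn g s := by
    intro s hs
    exact fun x hx => ((g_hasDerivAt μ α (hs hx)).continuousAt).continuousWithinAt
  rcases le_total μ z with hle | hle
  · have hmono : MonotoneOn g (Set.Icc μ α) := by
      apply monotoneOn_of_deriv_nonneg (convex_Icc μ α)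
      · exact hcont _ (fun x hx => lt_of_lt_of_le hμ0 hx.1)
      · intro x hx
        rw [interior_Icc] at hx
        exact ((g_hasDerivAt μ α (lt_trans hμ0 hx.1)).differentiableAt).differentiableWithinAt
      · intro x hx
        rw [interior_Icc] at hx
        have hx0 : 0 < x := lt_trans hμ0 hx.1
        rw [hg, (g_hasDerivAt μ α hx0).deriv]
        have h1 : 0 ≤ (x - μ) * (1 / x - 1 / α) := by
          apply mul_nonneg (by linarith [hx.1])
          have : 1 / α ≤ 1 / x := one_div_le_one_div_of_le hx0 (le_of_lt hx.2)
          linarith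
        have heq : 1 - μ / x + (μ - x) / α = (x - μ) * (1 / x - 1 / α) := by
          field_simp; ring
        rw [heq]; exact h1
    exact hmono ⟨le_refl μ, hμ2⟩ ⟨hle, hz2⟩ hle
  · have hanti : AntitoneOn g (Set.Icc β μ) := by
      apply antitoneOn_of_deriv_nonpos (convex_Icc β μ)
      · exact hcont _ (fun x hx => lt_of_lt_of_le hβ hx.1)
      · intro x hx
        rw [interior_Icc] at hx
        exact ((g_hasDerivAt μ α (lt_trans hβ hx.1)).differentiableAt).differentiableWithinAt
      · intro x hx
        rw [interior_Icc] at hx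
        have hx0 : 0 < x := lt_trans hβ hx.1
        rw [hg, (g_hasDerivAt μ α hx0).deriv]
        have hxα : x ≤ α := le_trans (le_of_lt hx.2) hμ2
        have h1 : 0 ≤ (μ - x) * (1 / x - 1 / α) := by
          apply mul_nonneg (by linarith [hx.2])
          have : 1 / α ≤ 1 / x := one_div_le_one_div_of_le hx0 hxα
          linarith
        have heq : 1 - μ / x + (μ - x) / α = -((μ - x) * (1 / x - 1 / α)) := by
          field_simp; ring
        rw [heq]; linarith
    exact hanti ⟨hz1, hle⟩ ⟨hμ1, le_refl μ⟩ hle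
end
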